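/- arXiv:2011.07626 — 2 statements merged into one kernel-verified Lean document; each statement's English description precedes it below -/
import Mathlib

section
/- Let M be a symmetric matrix partitioned so that V(x,λ) = (xᵀ, λᵀ, 1) M (xᵀ, λᵀ, 1)ᵀ, and let S₁, T₁ be as in the LMI relaxation. If T₁ - S₁ᵀ W₁ S₁ - ½(S₃ + S₃ᵀ) ⪰ 0 for some entrywise-nonnegative W₁ and S₃ encoding a diagonal multiplier on complementarity, then V(x,λ) ≥ α₁‖x‖² for every (x,λ) satisfying 0 ≤ λ ⊥ Ex + Fλ + c ≥ 0. -/
/-!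
Evaluate the LMI at `e = (x, λ, 1)`. The `T₁` block gives `V(x, λ) - α₁‖x‖²`. Since
`S₁ e = (y, λ, 1)` and `W₁` are entrywise nonnegative, the `S₁ᵀ W₁ S₁` term is nonnegative.
The `S₃` term equals `∑ τᵢ λᵢ yᵢ`, which vanishes termwise because a zero sum of the nonnegative
products `λᵢ yᵢ` forces each of them to be zero, whatever the sign of `τ`.
-/

noncomputable section

/-- The PWQ Lyapunov candidate `V(x,λ) = xᵀPx + 2xᵀQλ + λᵀRλ + 2h₁ᵀx + 2h₂ᵀλ + h₃`. -/
def Vfun {n m : ℕ} (P : Matrix (Fin n) (Fin n) ℝ) (Q : Matrix (Fin n) (Fin m) ℝ)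
    (R : Matrix (Fin m) (Fin m) ℝ) (h₁ : Fin n → ℝ) (h₂ : Fin m → ℝ) (h₃ : ℝ)
    (x : Fin n → ℝ) (l : Fin m → ℝ) : ℝ :=
  dotProduct x (P.mulVec x) + 2 * dotProduct x (Q.mulVec l) +
    dotProduct l (R.mulVec l) + 2 * dotProduct h₁ x +
    2 * dotProduct h₂ l + h₃

/-- The matrix `T₁`: the Lyapunov matrix `M` with `P` replaced by `P - α₁ I`. -/
def T1Mat {n m : ℕ} (α₁ : ℝ) (P : Matrix (Fin n) (Fin n) ℝ) (Q : Matrix (Fin n) (Fin m) ℝ)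
    (R : Matrix (Fin m) (Fin m) ℝ) (h₁ : Fin n → ℝ) (h₂ : Fin m → ℝ) (h₃ : ℝ) :
    Matrix (Fin n ⊕ Fin m ⊕ Unit) (Fin n ⊕ Fin m ⊕ Unit) ℝ :=
  fun a b =>
    match a, b with
    | .inl i, .inl j => P i j - α₁ * (if i = j then 1 else 0)
    | .inl i, .inr (.inl j) => Q i j
    | .inl i, .inr (.inr _) => h₁ i
    | .inr (.inl i), .inl j => Q j i
    | .inr (.inl i), .inr (.inl j) => R i j
    | .inr (.inl i), .inr (.inr _) => h₂ i
    | .inr (.inr _), .inl j => h₁ j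
    | .inr (.inr _), .inr (.inl j) => h₂ j
    | .inr (.inr _), .inr (.inr _) => h₃

/-- The matrix `S₁` mapping `(x, λ, 1)` to `(y, λ, 1)` where `y = Ex + Fλ + c`. -/
def S1Mat {n m : ℕ} (E : Matrix (Fin m) (Fin n) ℝ) (F : Matrix (Fin m) (Fin m) ℝ)
    (c : Fin m → ℝ) :
    Matrix (Fin m ⊕ Fin m ⊕ Unit) (Fin n ⊕ Fin m ⊕ Unit) ℝ :=
  fun a b =>
    match a, b with
    | .inl i, .inl j => E i j
    | .inl i, .inr (.inl j) => F i j
    | .inl i, .inr (.inr _) => c i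
    | .inr (.inl i), .inr (.inl j) => if i = j then (1 : ℝ) else 0
    | .inr (.inr _), .inr (.inr _) => 1
    | _, _ => 0

/-- The matrix `S₃` encoding the diagonal multiplier `2λᵀ diag(τ) y` on complementarity. -/
def S3Mat {n m : ℕ} (τ : Fin m → ℝ) (E : Matrix (Fin m) (Fin n) ℝ)
    (F : Matrix (Fin m) (Fin m) ℝ) (c : Fin m → ℝ) :
    Matrix (Fin n ⊕ Fin m ⊕ Unit) (Fin n ⊕ Fin m ⊕ Unit) ℝ :=
  fun a b =>
    match a, b with
    | .inr (.inl i), .inl j => τ i * E i j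
    | .inr (.inl i), .inr (.inl j) => τ i * F i j
    | .inr (.inl i), .inr (.inr _) => τ i * c i
    | _, _ => 0

open Matrix

theorem dotProduct_mulVec_nonneg_of_nonneg {ι R : Type*} [Fintype ι] [Semiring R] [PartialOrder R]
    [IsOrderedRing R] {W : Matrix ι ι R} (hW : ∀ a b, 0 ≤ W a b) {z : ι → R} (hz : ∀ a, 0 ≤ z a) :
    0 ≤ z ⬝ᵥ W *ᵥ z :=
  Finset.sum_nonneg fun a _ =>
    mul_nonneg (hz a) (Finset.sum_nonneg fun b _ => mul_nonneg (hW a b) (hz b))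

theorem dotProduct_transpose_mul_mul_mulVec {ι κ R : Type*} [Fintype ι] [Fintype κ]
    [CommSemiring R]     (S : Matrix κ ι R) (W : Matrix κ κ R) (v : ι → R) :
    v ⬝ᵥ (Sᵀ * W * S) *ᵥ v = S *ᵥ v ⬝ᵥ W *ᵥ (S *ᵥ v) := by
  rw [← mulVec_mulVec, ← mulVec_mulVec, dotProduct_transpose_mulVec, dotProduct_comm]

section HomogVec

variable {n m : ℕ}

def homogVec (x : Fin n → ℝ) (l : Fin m → ℝ) : Fin n ⊕ Fin m ⊕ Unit → ℝ :=
  Sum.elim x (Sum.elim l fun _ => 1)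

theorem homogVec_dotProduct_sumElim (x : Fin n → ℝ) (l : Fin m → ℝ) (a : Fin n → ℝ)
    (b : Fin m → ℝ) (k : ℝ) :
    homogVec x l ⬝ᵥ Sum.elim a (Sum.elim b fun _ => k) = x ⬝ᵥ a + l ⬝ᵥ b + k := by
  simp [homogVec, dotProduct, Fintype.sum_sum_type, add_assoc]

theorem S1Mat_mulVec_homogVec (E : Matrix (Fin m) (Fin n) ℝ) (F : Matrix (Fin m) (Fin m) ℝ)
    (c : Fin m → ℝ) (x : Fin n → ℝ) (l : Fin m → ℝ) :
    S1Mat E F c *ᵥ homogVec x l = Sum.elim (E *ᵥ x + F *ᵥ l + c) (Sum.elim l fun _ => 1) := by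
  ext (i | i | _) <;>
    simp [mulVec, dotProduct, S1Mat, homogVec, Fintype.sum_sum_type, add_assoc]

theorem S3Mat_mulVec_homogVec (τ : Fin m → ℝ) (E : Matrix (Fin m) (Fin n) ℝ)
    (F : Matrix (Fin m) (Fin m) ℝ) (c : Fin m → ℝ) (x : Fin n → ℝ) (l : Fin m → ℝ) :
    S3Mat τ E F c *ᵥ homogVec x l =
      Sum.elim (0 : Fin n → ℝ) (Sum.elim (τ * (E *ᵥ x + F *ᵥ l + c)) fun _ => 0) := by
  ext (i | i | _) <;>
    simp [mulVec, dotProduct, S3Mat, homogVec, Fintype.sum_sum_type, Finset.mul_sum, mul_add,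
      mul_assoc, add_assoc]

theorem T1Mat_mulVec_homogVec (α₁ : ℝ) (P : Matrix (Fin n) (Fin n) ℝ)
    (Q : Matrix (Fin n) (Fin m) ℝ) (R : Matrix (Fin m) (Fin m) ℝ) (h₁ : Fin n → ℝ)
    (h₂ : Fin m → ℝ) (h₃ : ℝ) (x : Fin n → ℝ) (l : Fin m → ℝ) :
    T1Mat α₁ P Q R h₁ h₂ h₃ *ᵥ homogVec x l =
      Sum.elim (P *ᵥ x - α₁ • x + Q *ᵥ l + h₁)
        (Sum.elim (Qᵀ *ᵥ x + R *ᵥ l + h₂) fun _ => h₁ ⬝ᵥ x + h₂ ⬝ᵥ l + h₃) := by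
  ext (i | i | _) <;>
    simp [mulVec, dotProduct, T1Mat, homogVec, Fintype.sum_sum_type, sub_mul, ite_mul, add_assoc]

theorem homogVec_dotProduct_T1Mat_mulVec (α₁ : ℝ) (P : Matrix (Fin n) (Fin n) ℝ)
    (Q : Matrix (Fin n) (Fin m) ℝ) (R : Matrix (Fin m) (Fin m) ℝ) (h₁ : Fin n → ℝ)
    (h₂ : Fin m → ℝ) (h₃ : ℝ) (x : Fin n → ℝ) (l : Fin m → ℝ) :
    homogVec x l ⬝ᵥ T1Mat α₁ P Q R h₁ h₂ h₃ *ᵥ homogVec x l =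
      Vfun P Q R h₁ h₂ h₃ x l - α₁ * ∑ i, x i ^ 2 := by
  rw [T1Mat_mulVec_homogVec, homogVec_dotProduct_sumElim, Vfun]
  simp only [dotProduct_add, dotProduct_sub, dotProduct_smul, dotProduct_transpose_mulVec,
    smul_eq_mul]
  rw [dotProduct_comm x h₁, dotProduct_comm l h₂]
  simp only [dotProduct, sq]
  ring

end HomogVec

theorem stmt_15_general (n m : ℕ)
    (P : Matrix (Fin n) (Fin n) ℝ) (Q : Matrix (Fin n) (Fin m) ℝ)
    (R : Matrix (Fin m) (Fin m) ℝ) (h₁ : Fin n → ℝ) (h₂ : Fin m → ℝ) (h₃ : ℝ)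
    (E : Matrix (Fin m) (Fin n) ℝ) (F : Matrix (Fin m) (Fin m) ℝ) (c : Fin m → ℝ)
    (α₁ : ℝ)
    (W₁ : Matrix (Fin m ⊕ Fin m ⊕ Unit) (Fin m ⊕ Fin m ⊕ Unit) ℝ)
    (hW₁ : ∀ a b, 0 ≤ W₁ a b) (τ : Fin m → ℝ)
    (hLMI : ∀ v : Fin n ⊕ Fin m ⊕ Unit → ℝ,
      0 ≤ dotProduct v
        ((T1Mat α₁ P Q R h₁ h₂ h₃ - (S1Mat E F c).transpose * W₁ * S1Mat E F c -
          (1 / 2 : ℝ) • (S3Mat τ E F c + (S3Mat τ E F c).transpose)).mulVec v)) :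
    ∀ (x : Fin n → ℝ) (l : Fin m → ℝ),
      (∀ i, 0 ≤ l i) →
      (∀ i, 0 ≤ E.mulVec x i + F.mulVec l i + c i) →
      (∑ i, l i * (E.mulVec x i + F.mulVec l i + c i) = 0) →
      α₁ * ∑ i, (x i) ^ 2 ≤ Vfun P Q R h₁ h₂ h₃ x l := by
  intro x l hl hy hcomp
  have hly : ∀ i, l i * ((E *ᵥ x) i + (F *ᵥ l) i + c i) = 0 := fun i =>
    (Finset.sum_eq_zero_iff_of_nonneg fun j _ => mul_nonneg (hl j) (hy j)).mp hcomp i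
      (Finset.mem_univ i)
  have hS1 : 0 ≤ homogVec x l ⬝ᵥ ((S1Mat E F c)ᵀ * W₁ * S1Mat E F c) *ᵥ homogVec x l := by
    rw [dotProduct_transpose_mul_mul_mulVec, S1Mat_mulVec_homogVec]
    refine dotProduct_mulVec_nonneg_of_nonneg hW₁ ?_
    rintro (i | i | _) <;> simp [hy, hl]
  have hS3 : homogVec x l ⬝ᵥ S3Mat τ E F c *ᵥ homogVec x l = 0 := by
    rw [S3Mat_mulVec_homogVec, homogVec_dotProduct_sumElim]
    simp [dotProduct, mul_left_comm (l _), hly]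
  have hS3T : homogVec x l ⬝ᵥ (S3Mat τ E F c)ᵀ *ᵥ homogVec x l = 0 := by
    rw [dotProduct_transpose_mulVec, hS3]
  have hLMI_e := hLMI (homogVec x l)
  simp only [sub_mulVec, add_mulVec, smul_mulVec, dotProduct_sub, dotProduct_add,
    dotProduct_smul, smul_eq_mul, homogVec_dotProduct_T1Mat_mulVec, hS3, hS3T] at hLMI_e
  linarith

theorem stmt_15 (n m : ℕ)
    (P : Matrix (Fin n) (Fin n) ℝ) (Q : Matrix (Fin n) (Fin m) ℝ)
    (R : Matrix (Fin m) (Fin m) ℝ) (h₁ : Fin n → ℝ) (h₂ : Fin m → ℝ) (h₃ : ℝ)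
    (hPsymm : P.IsSymm) (hRsymm : R.IsSymm)
    (E : Matrix (Fin m) (Fin n) ℝ) (F : Matrix (Fin m) (Fin m) ℝ) (c : Fin m → ℝ)
    (α₁ : ℝ)
    (W₁ : Matrix (Fin m ⊕ Fin m ⊕ Unit) (Fin m ⊕ Fin m ⊕ Unit) ℝ)
    (hW₁ : ∀ a b, 0 ≤ W₁ a b) (τ : Fin m → ℝ)
    (hLMI : ∀ v : Fin n ⊕ Fin m ⊕ Unit → ℝ,
      0 ≤ dotProduct v
        ((T1Mat α₁ P Q R h₁ h₂ h₃ - (S1Mat E F c).transpose * W₁ * S1Mat E F c -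
          (1 / 2 : ℝ) • (S3Mat τ E F c + (S3Mat τ E F c).transpose)).mulVec v)) :
    ∀ (x : Fin n → ℝ) (l : Fin m → ℝ),
      (∀ i, 0 ≤ l i) →
      (∀ i, 0 ≤ E.mulVec x i + F.mulVec l i + c i) →
      (∑ i, l i * (E.mulVec x i + F.mulVec l i + c i) = 0) →
      α₁ * ∑ i, (x i) ^ 2 ≤ Vfun P Q R h₁ h₂ h₃ x l :=
  stmt_15_general n m P Q R h₁ h₂ h₃ E F c α₁ W₁ hW₁ τ hLMI

end
end

section
/- Let φ(x) = h_L ∘ ReLU ∘ h_{L-1} ∘ ⋯ ∘ ReLU ∘ h₀ (x) with affine layers h_i(x) = θ_i x + c_i. Define the stacked variables λ = (λ₀,…,λ_{L-1}) and the block lower-triangular F̄ with identity diagonal blocks and sub-diagonal blocks -θ_i. Then the system ȳ = Ēx + F̄λ + c̄, 0 ≤ λ ⊥ ȳ ≥ 0 (with Ē = (-θ₀ᵀ, 0,…,0)ᵀ, c̄ = (-c₀,…,-c_{L-1})) has a unique solution λ(x), its blocks satisfy λ_i(x) = ReLU(h_i(λ_{i-1}(x))) recursively with λ₀(x) = ReLU(h₀(x)),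 and φ(x) = θ_L λ_{L-1}(x) + c_L. -/
/-- The input to layer `i`: the network input `x` for `i = 0`, otherwise
the previous block of complementarity variables. -/
def prevVec (dims : ℕ → ℕ) (x : Fin (dims 0) → ℝ)
    (lam : ∀ i : ℕ, Fin (dims (i + 1)) → ℝ) : (i : ℕ) → Fin (dims i) → ℝ
  | 0 => x
  | (i + 1) => lam i

/-- The hidden-layer activations of the ReLU network:
`z₀ = ReLU(θ₀ x + c₀)`, `z_{i+1} = ReLU(θ_{i+1} z_i + c_{i+1})`. -/
def zvec (dims : ℕ → ℕ) (θ : ∀ i : ℕ, Matrix (Fin (dims (i + 1))) (Fin (dims i)) ℝ)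
    (c : ∀ i : ℕ, Fin (dims (i + 1)) → ℝ) (x : Fin (dims 0) → ℝ) :
    (i : ℕ) → Fin (dims (i + 1)) → ℝ
  | 0 => fun j => max 0 ((θ 0).mulVec x j + c 0 j)
  | (i + 1) => fun j => max 0 ((θ (i + 1)).mulVec (zvec dims θ c x i) j + c (i + 1) j)

/-- The block complementarity condition for block `i`:
`0 ≤ λᵢ ⊥ (-θᵢ·(input of layer i) - cᵢ + λᵢ) ≥ 0`.  Stacked over all blocks this is
exactly `0 ≤ λ ⊥ Ēx + F̄λ + c̄ ≥ 0` with `F̄` block lower triangular with identity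
diagonal blocks and sub-diagonal blocks `-θᵢ`, `Ē = (-θ₀ᵀ,0,…,0)ᵀ`, `c̄ = (-c₀,…,-c_{L-1})`. -/
def LCPBlockCond (dims : ℕ → ℕ) (θ : ∀ i : ℕ, Matrix (Fin (dims (i + 1))) (Fin (dims i)) ℝ)
    (c : ∀ i : ℕ, Fin (dims (i + 1)) → ℝ) (x : Fin (dims 0) → ℝ)
    (lam : ∀ i : ℕ, Fin (dims (i + 1)) → ℝ) (i : ℕ) : Prop :=
  (∀ j, 0 ≤ lam i j) ∧
  (∀ j, 0 ≤ -((θ i).mulVec (prevVec dims x lam i) j + c i j) + lam i j) ∧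
  (∑ j, lam i j * (-((θ i).mulVec (prevVec dims x lam i) j + c i j) + lam i j) = 0)

/-!
Block `i` of the stacked complementarity problem only involves `λᵢ` and the block before it,
and in `λᵢ` alone it is the scalar complementarity problem `0 ≤ a ⊥ a - v ≥ 0` (identity diagonal
block), whose unique solution is `a = max 0 v`. Forward substitution through the triangular system
therefore forces `λᵢ = ReLU(hᵢ(λᵢ₋₁))`, which is the ReLU recursion.
-/

section Complementarity

variable {R : Type*} [CommRing R] [LinearOrder R] [IsStrictOrderedRing R]

theorem eq_max_zero_iff_complementarity {a v : R} :
    (0 ≤ a ∧ 0 ≤ -v + a ∧ a * (-v + a) = 0) ↔ a = max 0 v := by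
  constructor
  · rintro ⟨ha, hva, hprod⟩
    rcases mul_eq_zero.mp hprod with rfl | hgap
    · exact (max_eq_left (by linarith)).symm
    · rw [show v = a by linarith, max_eq_right ha]
  · rintro rfl
    rcases le_total v 0 with hv | hv <;> simp [hv]

theorem eq_relu_iff_complementarity {ι : Type*} [Fintype ι] {a v : ι → R} :
    ((∀ j, 0 ≤ a j) ∧ (∀ j, 0 ≤ -v j + a j) ∧ ∑ j, a j * (-v j + a j) = 0) ↔
      a = fun j => max 0 (v j) := by
  constructor
  · rintro ⟨ha, hva, hsum⟩
    have hprod := (Finset.sum_eq_zero_iff_of_nonneg fun j _ => mul_nonneg (ha j) (hva j)).mp hsum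
    funext j
    exact eq_max_zero_iff_complementarity.mp ⟨ha j, hva j, hprod j (Finset.mem_univ j)⟩
  · rintro rfl
    have hj (j : ι) := eq_max_zero_iff_complementarity.mpr (rfl : max 0 (v j) = _)
    exact ⟨fun j => (hj j).1, fun j => (hj j).2.1, Finset.sum_eq_zero fun j _ => (hj j).2.2⟩

end Complementarity

section ReLUNetwork

variable {dims : ℕ → ℕ} {θ : ∀ i : ℕ, Matrix (Fin (dims (i + 1))) (Fin (dims i)) ℝ}
  {c : ∀ i : ℕ, Fin (dims (i + 1)) → ℝ} {x : Fin (dims 0) → ℝ}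

theorem lcpBlockCond_iff {lam : ∀ i : ℕ, Fin (dims (i + 1)) → ℝ} {i : ℕ} :
    LCPBlockCond dims θ c x lam i ↔
      lam i = fun j => max 0 ((θ i).mulVec (prevVec dims x lam i) j + c i j) :=
  eq_relu_iff_complementarity

theorem zvec_eq_relu_prevVec (i : ℕ) :
    zvec dims θ c x i =
      fun j => max 0 ((θ i).mulVec (prevVec dims x (zvec dims θ c x) i) j + c i j) := by
  cases i <;> rfl

theorem prevVec_eq_of_lcpBlockCond {L : ℕ} {lam : ∀ i : ℕ, Fin (dims (i + 1)) → ℝ}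
    (hlam : ∀ i < L, LCPBlockCond dims θ c x lam i) :
    ∀ i ≤ L, prevVec dims x lam i = prevVec dims x (zvec dims θ c x) i
  | 0, _ => rfl
  | i + 1, hi => by
    change lam i = zvec dims θ c x i
    rw [lcpBlockCond_iff.mp (hlam i hi), zvec_eq_relu_prevVec,
      prevVec_eq_of_lcpBlockCond hlam i (Nat.le_of_succ_le hi)]

end ReLUNetwork

theorem stmt_17_general (L : ℕ) (dims : ℕ → ℕ)
    (θ : ∀ i : ℕ, Matrix (Fin (dims (i + 1))) (Fin (dims i)) ℝ)
    (c : ∀ i : ℕ, Fin (dims (i + 1)) → ℝ) (x : Fin (dims 0) → ℝ) :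
    -- existence: the ReLU recursion solves the stacked LCP
    (∀ i < L, LCPBlockCond dims θ c x (zvec dims θ c x) i) ∧
    -- uniqueness: any solution of the stacked LCP equals the ReLU recursion blockwise
    (∀ lam : ∀ i : ℕ, Fin (dims (i + 1)) → ℝ,
      (∀ i < L, LCPBlockCond dims θ c x lam i) → ∀ i < L, lam i = zvec dims θ c x i) ∧
    -- the network output `φ(x) = θ_L λ_{L-1} + c_L` computed from any LCP solution
    -- agrees with the ReLU network `h_L ∘ ReLU ∘ h_{L-1} ∘ ⋯ ∘ ReLU ∘ h₀`
    (∀ lam : ∀ i : ℕ, Fin (dims (i + 1)) → ℝ,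
      (∀ i < L, LCPBlockCond dims θ c x lam i) →
      (fun j => (θ L).mulVec (prevVec dims x lam L) j + c L j) =
        fun j => (θ L).mulVec (prevVec dims x (zvec dims θ c x) L) j + c L j) := by
  refine ⟨fun i _ => lcpBlockCond_iff.mpr (zvec_eq_relu_prevVec i),
    fun lam hlam i hi => prevVec_eq_of_lcpBlockCond hlam (i + 1) hi, fun lam hlam => ?_⟩
  rw [prevVec_eq_of_lcpBlockCond hlam L le_rfl]

theorem stmt_17 (L : ℕ) (hL : 0 < L) (dims : ℕ → ℕ)
    (θ : ∀ i : ℕ, Matrix (Fin (dims (i + 1))) (Fin (dims i)) ℝ)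
    (c : ∀ i : ℕ, Fin (dims (i + 1)) → ℝ) (x : Fin (dims 0) → ℝ) :
    -- existence: the ReLU recursion solves the stacked LCP
    (∀ i < L, LCPBlockCond dims θ c x (zvec dims θ c x) i) ∧
    -- uniqueness: any solution of the stacked LCP equals the ReLU recursion blockwise
    (∀ lam : ∀ i : ℕ, Fin (dims (i + 1)) → ℝ,
      (∀ i < L, LCPBlockCond dims θ c x lam i) → ∀ i < L, lam i = zvec dims θ c x i) ∧
    -- the network output `φ(x) = θ_L λ_{L-1} + c_L` computed from any LCP solution
    -- agrees with the ReLU network `h_L ∘ ReLU ∘ h_{L-1} ∘ ⋯ ∘ ReLU ∘ h₀`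
    (∀ lam : ∀ i : ℕ, Fin (dims (i + 1)) → ℝ,
      (∀ i < L, LCPBlockCond dims θ c x lam i) →
      (fun j => (θ L).mulVec (prevVec dims x lam L) j + c L j) =
        fun j => (θ L).mulVec (prevVec dims x (zvec dims θ c x) L) j + c L j) :=
  stmt_17_general L dims θ c x
end
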